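/- For k = 2 and the affine symmetric group S̃_3, the affine Grassmannian element corresponding to the 2-bounded partition (2^a, 1^b) has exactly binomial(⌊b/2⌋ + a, a) reduced words. -/

import Mathlib

/-- The defining relators of the affine symmetric group `S̃_n`. -/
def affineRels (n : ℕ) : Set (FreeGroup (ZMod n)) :=
  {r | (∃ i : ZMod n, r = FreeGroup.of i * FreeGroup.of i) ∨
       (∃ i : ZMod n, r = FreeGroup.of i * FreeGroup.of (i + 1) * FreeGroup.of i *
          (FreeGroup.of (i + 1) * FreeGroup.of i * FreeGroup.of (i + 1))⁻¹) ∨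
       (∃ i j : ZMod n, j ≠ i ∧ j ≠ i + 1 ∧ i ≠ j + 1 ∧
          r = FreeGroup.of i * FreeGroup.of j * (FreeGroup.of j * FreeGroup.of i)⁻¹)}

/-- The affine symmetric group `S̃_n`. -/
abbrev AffineSymmetricGroup (n : ℕ) := PresentedGroup (affineRels n)

/-- The product of the word `l` of simple generators in `S̃_n`. -/
def awordProd (n : ℕ) (l : List (ZMod n)) : AffineSymmetricGroup n :=
  (l.map PresentedGroup.of).prod

/-- `l` is a reduced word for `w ∈ S̃_n`. -/
def IsReducedAWord (n : ℕ) (w : AffineSymmetricGroup n) (l : List (ZMod n)) : Prop :=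
  awordProd n l = w ∧ ∀ l' : List (ZMod n), awordProd n l' = w → l.length ≤ l'.length

/-- The canonical word for the affine Grassmannian element of `S̃_3` corresponding to
the 2-bounded partition `(2^a, 1^b)`: the residues `j − i (mod 3)` of the cells `(i,j)`
of the partition, read row by row from the shortest (top) row to the longest (bottom)
row, each row from right to left. -/
def grassmannianWord (a b : ℕ) : List (ZMod 3) :=
  ((List.range b).map fun t => -((a + b - 1 - t : ℕ) : ZMod 3)) ++
  ((List.range a).map fun t =>
      [1 - ((a - 1 - t : ℕ) : ZMod 3), -((a - 1 - t : ℕ) : ZMod 3)]).flatten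

/-!
Realize `S̃_3` as affine permutations of `ℤ`, `s_j` exchanging the residue classes `j` and `j + 1`
mod 3, and record an element by its window `[w(1), w(2), w(3)]`. Shi's inversion count
`Σ_{p < q} |⌊(w(q) - w(p)) / 3⌋|` grows by at most one under each generator, so it bounds the length
of every word for `w` from below. For `w = w_{(2^a, 1^b)}` it equals `2a + b`, the length of the
canonical word, so the reduced words of `w` are exactly its words of length `2a + b`.

Sorting these words by their first letter: `s_{1-a-b} w = w_{(2^a, 1^(b-1))}` when `b > 0`, a braid
move gives `s_{2-a-b} w = w_{(2^(a-1), 1^(b+1))}` when `b` is even and `a > 0`, and every other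
generator lengthens `w`. The number of reduced words thus satisfies Pascal's recursion
`c(a, b) = c(a, b - 1) + [b even] c(a - 1, b + 1)`, which `binomial(⌊b/2⌋ + a, a)` solves.
-/

namespace AffineSymmetricGroup

open PresentedGroup

section Words

variable {n : ℕ}

@[simp]
lemma awordProd_nil : awordProd n [] = 1 := rfl

@[simp]
lemma awordProd_cons (i : ZMod n) (l : List (ZMod n)) :
    awordProd n (i :: l) = of i * awordProd n l := List.prod_cons

lemma of_mul_self (i : ZMod n) : (of i * of i : AffineSymmetricGroup n) = 1 :=
  one_of_mem (Or.inl ⟨i, rfl⟩)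

lemma of_mul_of_mul_of (i : ZMod n) :
    (of i * of (i + 1) * of i : AffineSymmetricGroup n) = of (i + 1) * of i * of (i + 1) :=
  mk_eq_mk_of_mul_inv_mem (Or.inr (Or.inl ⟨i, rfl⟩))

lemma of_mul_cancel_left (i : ZMod n) (w : AffineSymmetricGroup n) : of i * (of i * w) = w := by
  rw [← mul_assoc, of_mul_self, one_mul]

noncomputable def wordCount (w : AffineSymmetricGroup n) (m : ℕ) : ℕ :=
  Nat.card {l : List (ZMod n) // awordProd n l = w ∧ l.length = m}

instance [NeZero n] (w : AffineSymmetricGroup n) (m : ℕ) :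
    Finite {l : List (ZMod n) // awordProd n l = w ∧ l.length = m} :=
  ((List.finite_length_eq (ZMod n) m).subset fun _ hl => hl.2).to_subtype

lemma wordCount_one_zero : wordCount (1 : AffineSymmetricGroup n) 0 = 1 := by
  rw [wordCount, Nat.card_eq_one_iff_exists]
  exact ⟨⟨[], rfl, rfl⟩, fun ⟨l, _, hl⟩ => Subtype.ext (List.length_eq_zero_iff.mp hl)⟩

lemma wordCount_succ [NeZero n] (w : AffineSymmetricGroup n) (m : ℕ) :
    wordCount w (m + 1) = ∑ i, wordCount (of i * w) m := by
  simp only [wordCount]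
  rw [← Nat.card_sigma]
  refine (Nat.card_eq_of_bijective
    (fun x : Σ i, {l : List (ZMod n) // awordProd n l = of i * w ∧ l.length = m} =>
      (⟨x.1 :: x.2.1, by rw [awordProd_cons, x.2.2.1, of_mul_cancel_left], by
        rw [List.length_cons, x.2.2.2]⟩ :
        {l : List (ZMod n) // awordProd n l = w ∧ l.length = m + 1})) ⟨?_, ?_⟩).symm
  · rintro ⟨i, l, hl⟩ ⟨i', l', hl'⟩ h
    obtain ⟨rfl, rfl⟩ := List.cons_eq_cons.mp (congrArg Subtype.val h)
    rfl
  · rintro ⟨_ | ⟨i, l⟩, hw, hl⟩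
    · simp at hl
    · refine ⟨⟨i, l, ?_, by simpa using hl⟩, rfl⟩
      rw [← hw, awordProd_cons, of_mul_cancel_left]

lemma card_isReducedAWord {w : AffineSymmetricGroup n} {m : ℕ}
    (hw : ∃ l, awordProd n l = w ∧ l.length = m) (hm : ∀ l, awordProd n l = w → m ≤ l.length) :
    Nat.card {l // IsReducedAWord n w l} = wordCount w m := by
  obtain ⟨l₀, hl₀, rfl⟩ := hw
  refine Nat.card_congr (Equiv.subtypeEquivRight fun l => ?_)
  exact ⟨fun h => ⟨h.1, le_antisymm (h.2 l₀ hl₀) (hm l h.1)⟩,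
    fun h => ⟨h.1, fun l' hl' => h.2 ▸ hm l' hl'⟩⟩

end Words

lemma sum_zmod_three {M : Type*} [AddCommMonoid M] (f : ZMod 3 → M) (j : ℤ) :
    ∑ i, f i = f j + f ((j + 1 : ℤ)) + f ((j + 2 : ℤ)) := by
  rw [← Equiv.sum_comp (Equiv.addLeft (j : ZMod 3))]
  exact (Fin.sum_univ_three _).trans (by
    push_cast; exact congrArg (· + _ + _) (congrArg f (add_zero _)))

/-- `s_j` acts on `ℤ` by exchanging `3k + j` and `3k + j + 1` for every `k`. -/
def swapResidues (j x : ℤ) : ℤ :=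
  if x % 3 = j % 3 then x + 1 else if x % 3 = (j + 1) % 3 then x - 1 else x

lemma swapResidues_cases (j x : ℤ) :
    (x % 3 = j % 3 ∧ swapResidues j x = x + 1) ∨
      (x % 3 = (j + 1) % 3 ∧ swapResidues j x = x - 1) ∨
      (x % 3 = (j + 2) % 3 ∧ swapResidues j x = x) := by
  unfold swapResidues
  split_ifs <;> omega

lemma swapResidues_involutive (j : ℤ) : Function.Involutive (swapResidues j) := fun x => by
  have := swapResidues_cases j x
  have := swapResidues_cases j (swapResidues j x)
  omega

lemma swapResidues_braid (j x : ℤ) :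
    swapResidues j (swapResidues (j + 1) (swapResidues j x)) =
      swapResidues (j + 1) (swapResidues j (swapResidues (j + 1) x)) := by
  have := swapResidues_cases j x
  have := swapResidues_cases (j + 1) (swapResidues j x)
  have := swapResidues_cases j (swapResidues (j + 1) (swapResidues j x))
  have := swapResidues_cases (j + 1) x
  have := swapResidues_cases j (swapResidues (j + 1) x)
  have := swapResidues_cases (j + 1) (swapResidues j (swapResidues (j + 1) x))
  omega

lemma swapResidues_congr {j k : ℤ} (h : j % 3 = k % 3) : swapResidues j = swapResidues k := by
  funext x
  unfold swapResidues
  split_ifs <;> omega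

def reflection (i : ZMod 3) : Equiv.Perm ℤ :=
  (swapResidues_involutive i.val).toPerm

lemma coe_reflection_intCast (j : ℤ) : ⇑(reflection j) = swapResidues j :=
  swapResidues_congr (by rw [ZMod.val_intCast]; push_cast; omega)

lemma lift_reflection_of_mem_affineRels : ∀ r ∈ affineRels 3, FreeGroup.lift reflection r = 1 := by
  rintro r (⟨i, rfl⟩ | ⟨i, rfl⟩ | ⟨i, j, h₁, h₂, h₃, -⟩)
  · ext x
    exact swapResidues_involutive _ x
  · obtain ⟨j, rfl⟩ := ZMod.intCast_surjective i
    rw [map_mul, map_inv, mul_inv_eq_one]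
    ext x
    simp only [map_mul, FreeGroup.lift_apply_of, Equiv.Perm.mul_apply]
    rw [← Int.cast_one, ← Int.cast_add, coe_reflection_intCast, coe_reflection_intCast]
    exact swapResidues_braid j x
  · exfalso
    revert i j
    decide

def toPerm : AffineSymmetricGroup 3 →* Equiv.Perm ℤ :=
  PresentedGroup.toGroup lift_reflection_of_mem_affineRels

def window (w : AffineSymmetricGroup 3) : ℤ × ℤ × ℤ := (toPerm w 1, toPerm w 2, toPerm w 3)

def swapWindow (j : ℤ) (v : ℤ × ℤ × ℤ) : ℤ × ℤ × ℤ :=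
  (swapResidues j v.1, swapResidues j v.2.1, swapResidues j v.2.2)

lemma window_one : window 1 = (1, 2, 3) := rfl

lemma window_of_mul (j : ℤ) (w : AffineSymmetricGroup 3) :
    window (of (j : ZMod 3) * w) = swapWindow j (window w) := by
  simp [window, swapWindow, toPerm, coe_reflection_intCast]

/-- The contribution `|⌊(y - x) / 3⌋|` of two window entries `x` before `y` to Shi's formula
for the length of an affine permutation. -/
def pairInv (x y : ℤ) : ℕ := ((y - x) / 3).natAbs

def numInv (v : ℤ × ℤ × ℤ) : ℕ := pairInv v.1 v.2.1 + pairInv v.1 v.2.2 + pairInv v.2.1 v.2.2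

def ResiduesDistinct (v : ℤ × ℤ × ℤ) : Prop :=
  v.1 % 3 ≠ v.2.1 % 3 ∧ v.1 % 3 ≠ v.2.2 % 3 ∧ v.2.1 % 3 ≠ v.2.2 % 3

lemma pairInv_swapResidues (j x y : ℤ) :
    pairInv (swapResidues j x) (swapResidues j y) ≤ pairInv x y + 1 ∧
      (x % 3 = (j + 2) % 3 ∨ y % 3 = (j + 2) % 3 →
        pairInv (swapResidues j x) (swapResidues j y) = pairInv x y) := by
  have := swapResidues_cases j x
  have := swapResidues_cases j y
  unfold pairInv
  omega

lemma ResiduesDistinct.swapWindow {v : ℤ × ℤ × ℤ} (h : ResiduesDistinct v) (j : ℤ) :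
    ResiduesDistinct (swapWindow j v) := by
  obtain ⟨x, y, z⟩ := v
  simp only [ResiduesDistinct, AffineSymmetricGroup.swapWindow] at h ⊢
  have := swapResidues_cases j x
  have := swapResidues_cases j y
  have := swapResidues_cases j z
  omega

lemma numInv_swapWindow_le {v : ℤ × ℤ × ℤ} (h : ResiduesDistinct v) (j : ℤ) :
    numInv (swapWindow j v) ≤ numInv v + 1 := by
  obtain ⟨x, y, z⟩ := v
  simp only [ResiduesDistinct] at h
  obtain ⟨hxy, hxz, hyz⟩ := h
  have := pairInv_swapResidues j x y
  have := pairInv_swapResidues j x z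
  have := pairInv_swapResidues j y z
  simp only [numInv, swapWindow]
  omega

lemma residuesDistinct_window_awordProd (l : List (ZMod 3)) :
    ResiduesDistinct (window (awordProd 3 l)) := by
  induction l with
  | nil =>
    rw [awordProd_nil, window_one]
    exact ⟨by decide, by decide, by decide⟩
  | cons i l ih =>
    obtain ⟨j, rfl⟩ := ZMod.intCast_surjective i
    rw [awordProd_cons, window_of_mul]
    exact ih.swapWindow j

lemma numInv_window_awordProd_le (l : List (ZMod 3)) :
    numInv (window (awordProd 3 l)) ≤ l.length := by
  induction l with
  | nil => rfl
  | cons i l ih =>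
    obtain ⟨j, rfl⟩ := ZMod.intCast_surjective i
    rw [awordProd_cons, window_of_mul, List.length_cons]
    exact (numInv_swapWindow_le (residuesDistinct_window_awordProd l) j).trans (by omega)

lemma wordCount_eq_zero_of_lt {w : AffineSymmetricGroup 3} {m : ℕ}
    (h : m < numInv (window w)) : wordCount w m = 0 := by
  rw [wordCount, Nat.card_eq_zero]
  refine Or.inl ⟨fun ⟨l, hl, hm⟩ => ?_⟩
  have := numInv_window_awordProd_le l
  rw [hl, hm] at this
  omega

lemma grassmannianWord_succ_right (a b : ℕ) :
    grassmannianWord a (b + 1) = -((a + b : ℕ) : ZMod 3) :: grassmannianWord a b := by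
  simp only [grassmannianWord, List.range_succ_eq_map, List.map_cons, List.map_map,
    List.cons_append, Nat.sub_zero, Nat.add_sub_cancel, ← add_assoc]
  congr 3
  funext t
  exact congrArg (fun k : ℕ => -(k : ZMod 3)) (by omega)

lemma grassmannianWord_succ_zero (a : ℕ) :
    grassmannianWord (a + 1) 0 = (1 - a : ZMod 3) :: -(a : ZMod 3) :: grassmannianWord a 0 := by
  simp only [grassmannianWord, List.range_zero, List.map_nil, List.nil_append,
    List.range_succ_eq_map, List.map_cons, List.map_map, List.flatten_cons, Nat.add_sub_cancel,
    Nat.sub_zero, List.cons_append]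
  congr 4
  funext t
  exact congrArg (fun k : ℕ => [1 - (k : ZMod 3), -(k : ZMod 3)]) (by omega)

lemma length_grassmannianWord (a b : ℕ) : (grassmannianWord a b).length = 2 * a + b := by
  simp [grassmannianWord, Function.comp_def]
  ring

/-- The affine Grassmannian element `w_λ` of `S̃_3` for `λ = (2^a, 1^b)`. -/
def grassmannian (a b : ℕ) : AffineSymmetricGroup 3 := awordProd 3 (grassmannianWord a b)

lemma grassmannian_succ_right (a b : ℕ) :
    grassmannian a (b + 1) = of ((-(a + b) : ℤ) : ZMod 3) * grassmannian a b := by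
  rw [grassmannian, grassmannianWord_succ_right, awordProd_cons]
  push_cast
  rfl

lemma grassmannian_succ_zero (a : ℕ) :
    grassmannian (a + 1) 0 =
      of ((1 - a : ℤ) : ZMod 3) * (of ((-a : ℤ) : ZMod 3) * grassmannian a 0) := by
  rw [grassmannian, grassmannianWord_succ_zero, awordProd_cons, awordProd_cons]
  push_cast
  rfl

lemma grassmannian_succ_two_mul (a m : ℕ) :
    grassmannian (a + 1) (2 * m) =
      of ((1 - a - 2 * m : ℤ) : ZMod 3) * grassmannian a (2 * m + 1) := by
  induction m with
  | zero =>
    rw [grassmannian_succ_zero, grassmannian_succ_right]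
    push_cast
    simp
  | succ m ih =>
    rw [show 2 * (m + 1) = 2 * m + 1 + 1 by ring, grassmannian_succ_right (a + 1) (2 * m + 1),
      grassmannian_succ_right (a + 1) (2 * m), ih, grassmannian_succ_right a (2 * m + 1 + 1),
      grassmannian_succ_right a (2 * m + 1)]
    push_cast
    set i : ZMod 3 := 1 - a - 2 * m
    have h3 : (3 : ZMod 3) = 0 := rfl
    rw [show (-(a + 1 + (2 * m + 1)) : ZMod 3) = i by linear_combination -h3,
      show (-(a + 1 + 2 * m) : ZMod 3) = i + 1 by linear_combination -h3,
      show (1 - a - 2 * (m + 1) : ZMod 3) = i + 1 by linear_combination -h3,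
      show (-(a + (2 * m + 1 + 1)) : ZMod 3) = i by linear_combination -h3,
      show (-(a + (2 * m + 1)) : ZMod 3) = i + 1 by linear_combination -h3]
    simp only [← mul_assoc, of_mul_of_mul_of]

def grassmannianWindow (a b : ℕ) : ℤ × ℤ × ℤ :=
  (1 - a - b, 2 - a + (b / 2 : ℕ), 3 + 2 * a + ((b + 1) / 2 : ℕ))

lemma window_grassmannian_zero (a : ℕ) : window (grassmannian a 0) = grassmannianWindow a 0 := by
  induction a with
  | zero => rfl
  | succ a ih =>
    rw [grassmannian_succ_zero, window_of_mul, window_of_mul, ih]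
    simp only [grassmannianWindow, swapWindow, swapResidues, Prod.mk.injEq]
    split_ifs <;> omega

lemma window_grassmannian (a b : ℕ) : window (grassmannian a b) = grassmannianWindow a b := by
  induction b with
  | zero => exact window_grassmannian_zero a
  | succ b ih =>
    rw [grassmannian_succ_right, window_of_mul, ih]
    simp only [grassmannianWindow, swapWindow, swapResidues, Prod.mk.injEq]
    split_ifs <;> omega

lemma numInv_window_grassmannian (a b : ℕ) : numInv (window (grassmannian a b)) = 2 * a + b := by
  rw [window_grassmannian]
  simp only [numInv, pairInv, grassmannianWindow]
  omega

lemma two_mul_add_le_length_of_awordProd_eq {a b : ℕ} {l : List (ZMod 3)}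
    (hl : awordProd 3 l = grassmannian a b) : 2 * a + b ≤ l.length := by
  rw [← numInv_window_grassmannian, ← hl]
  exact numInv_window_awordProd_le l

/-- The left descents of `grassmannian a b` are `s_{1-a-b}` (if `b > 0`) and `s_{2-a-b}`
(if `b` is even and `a > 0`). -/
lemma numInv_window_of_mul_grassmannian (a b : ℕ) (j : ℤ)
    (h₁ : 0 < b → (j - (1 - a - b)) % 3 ≠ 0) (h₂ : Even b → 0 < a → (j - (2 - a - b)) % 3 ≠ 0) :
    numInv (window (of (j : ZMod 3) * grassmannian a b)) = 2 * a + b + 1 := by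
  rw [Nat.even_iff] at h₂
  rw [window_of_mul, window_grassmannian]
  simp only [numInv, pairInv, grassmannianWindow, swapWindow]
  have := swapResidues_cases j (1 - a - b)
  have := swapResidues_cases j (2 - a + (b / 2 : ℕ))
  have := swapResidues_cases j (3 + 2 * a + ((b + 1) / 2 : ℕ))
  omega

lemma wordCount_grassmannian_succ (a b n : ℕ) (h : 2 * a + b = n + 1) :
    wordCount (grassmannian a b) (n + 1) =
      (if 0 < b then wordCount (grassmannian a (b - 1)) n else 0) +
        (if Even b ∧ 0 < a then wordCount (grassmannian (a - 1) (b + 1)) n else 0) := by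
  have lengthens : ∀ j : ℤ, (0 < b → (j - (1 - a - b)) % 3 ≠ 0) →
      (Even b → 0 < a → (j - (2 - a - b)) % 3 ≠ 0) →
      wordCount (of (j : ZMod 3) * grassmannian a b) n = 0 := fun j h₁ h₂ =>
    wordCount_eq_zero_of_lt (by rw [numInv_window_of_mul_grassmannian a b j h₁ h₂]; omega)
  rw [wordCount_succ, sum_zmod_three _ (1 - a - b),
    lengthens (1 - a - b + 2) (by omega) (by omega), add_zero]
  congr 1
  · split_ifs with hb
    · obtain ⟨b, rfl⟩ := Nat.exists_eq_add_of_lt hb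
      rw [zero_add, grassmannian_succ_right, show (1 - a - (b + 1 : ℕ) : ℤ) = -(a + b) by
        push_cast; ring, of_mul_cancel_left, Nat.add_sub_cancel]
    · exact lengthens _ (by omega) (by omega)
  · split_ifs with hab
    · obtain ⟨⟨m, rfl⟩, ha⟩ := hab
      obtain ⟨a, rfl⟩ := Nat.exists_eq_add_of_lt ha
      rw [zero_add, ← two_mul, grassmannian_succ_two_mul,
        show (1 - (a + 1 : ℕ) - (2 * m : ℕ) + 1 : ℤ) = 1 - a - 2 * m by push_cast; ring,
        of_mul_cancel_left, Nat.add_sub_cancel]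
    · exact lengthens _ (by omega) fun hb ha => absurd ⟨hb, ha⟩ hab

lemma choose_half_add_eq (a b : ℕ) (h : 0 < a ∨ 0 < b) :
    (b / 2 + a).choose a =
      (if 0 < b then ((b - 1) / 2 + a).choose a else 0) +
        (if Even b ∧ 0 < a then ((b + 1) / 2 + (a - 1)).choose (a - 1) else 0) := by
  obtain ⟨m, rfl | rfl⟩ := Nat.even_or_odd' b
  · rcases a with _ | a
    · obtain ⟨m, rfl⟩ : ∃ k, m = k + 1 := ⟨m - 1, by omega⟩
      simp
    · rcases m with _ | m
      · simp
      · rw [if_pos (by omega), if_pos ⟨even_two_mul _, a.succ_pos⟩, Nat.add_sub_cancel,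
          show 2 * (m + 1) / 2 + (a + 1) = m + (a + 1) + 1 by omega,
          show (2 * (m + 1) - 1) / 2 + (a + 1) = m + (a + 1) by omega,
          show (2 * (m + 1) + 1) / 2 + a = m + (a + 1) by omega, Nat.choose_succ_succ', add_comm]
  · have h₁ : (2 * m + 1) / 2 = m := by omega
    simp [h₁]

theorem wordCount_grassmannian (a b : ℕ) :
    wordCount (grassmannian a b) (2 * a + b) = (b / 2 + a).choose a := by
  induction hn : 2 * a + b using Nat.strong_induction_on generalizing a b with
  | _ n ih =>
    rcases n with _ | n
    · obtain ⟨rfl, rfl⟩ : a = 0 ∧ b = 0 := by omega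
      exact wordCount_one_zero
    · rw [wordCount_grassmannian_succ a b n hn, choose_half_add_eq a b (by omega)]
      congr 1 <;> split_ifs <;> first | rfl | exact ih n (by omega) _ _ (by omega)

end AffineSymmetricGroup


/-- For `k = 2`: the affine Grassmannian element of `S̃_3` corresponding to the
2-bounded partition `(2^a, 1^b)` has exactly `binomial(⌊b/2⌋ + a, a)` reduced words. -/
theorem card_reducedWords_grassmannian_S3 (a b : ℕ) :
    Nat.card {l : List (ZMod 3) // IsReducedAWord 3 (awordProd 3 (grassmannianWord a b)) l}
      = Nat.choose (b / 2 + a) a := by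
  open AffineSymmetricGroup in
  exact (card_isReducedAWord ⟨_, rfl, length_grassmannianWord a b⟩
    fun _ => two_mul_add_le_length_of_awordProd_eq).trans (wordCount_grassmannian a b)
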